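/- arXiv:cs/0510049 — 5 statements merged into one kernel-verified Lean document; each statement's English description precedes it below -/
import Mathlib

section
/- Let ω be a nonzero vector in ℝ^n with nonnegative entries, and suppose that for every index l, the sum of the entries of ω over all indices different from l is at least (q+1)·ω_l. Then the AWGNC pseudo-weight of ω, defined as wₚ(ω) = (∑ᵢ ωᵢ)² / (∑ᵢ ωᵢ²), satisfies wₚ(ω) ≥ q + 2. -/
/-! Adding `ω l` to the cone inequality at `l` gives `(q+2) ω l ≤ ‖ω‖₁`. Multiplying by
`ω l ≥ 0` and summing over `l` yields `(q+2) ‖ω‖₂² ≤ ‖ω‖₁²`, whatever the sign of `q+2`. -/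

open Finset

theorem mul_sum_sq_le_sq_sum {ι R : Type*} [CommSemiring R] [PartialOrder R] [IsOrderedRing R]
    (s : Finset ι) (c : R) {w : ι → R} (hw : ∀ i ∈ s, 0 ≤ w i)
    (hc : ∀ i ∈ s, c * w i ≤ ∑ j ∈ s, w j) :
    c * ∑ i ∈ s, w i ^ 2 ≤ (∑ i ∈ s, w i) ^ 2 :=
  calc c * ∑ i ∈ s, w i ^ 2 = ∑ i ∈ s, w i * (c * w i) := by
        rw [mul_sum]; congr! 1 with i; ring
    _ ≤ ∑ i ∈ s, w i * ∑ j ∈ s, w j :=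
        sum_le_sum fun i hi => mul_le_mul_of_nonneg_left (hc i hi) (hw i hi)
    _ = (∑ i ∈ s, w i) ^ 2 := by rw [← sum_mul, sq]

theorem sum_sq_pos_of_ne_zero {ι R : Type*} [Fintype ι] [Ring R] [LinearOrder R]
    [IsStrictOrderedRing R] {v : ι → R} (hv : v ≠ 0) : 0 < ∑ i, v i ^ 2 := by
  obtain ⟨j, hj⟩ := Function.ne_iff.mp hv
  exact sum_pos' (fun i _ => sq_nonneg (v i)) ⟨j, mem_univ j, sq_pos_of_ne_zero hj⟩

theorem sum_sdiff_singleton_add {ι M : Type*} [Fintype ι] [DecidableEq ι] [AddCommMonoid M]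
    (f : ι → M) (l : ι) : ∑ i ∈ univ \ {l}, f i + f l = ∑ i, f i := by
  rw [sdiff_singleton_eq_erase, sum_erase_add _ _ (mem_univ l)]

theorem pseudoweight_lower_bound (n : ℕ) (q : ℝ) (ω : Fin n → ℝ)
    (hω : ω ≠ 0) (hnn : ∀ i, 0 ≤ ω i)
    (hcone : ∀ l, ∑ i ∈ univ \ {l}, ω i ≥ (q + 1) * ω l) :
    (∑ i, ω i) ^ 2 / (∑ i, ω i ^ 2) ≥ q + 2 := by
  have hentry : ∀ l ∈ univ, (q + 2) * ω l ≤ ∑ i, ω i := fun l _ => by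
    rw [← sum_sdiff_singleton_add ω l]
    linarith [hcone l]
  rw [ge_iff_le, le_div_iff₀ (sum_sq_pos_of_ne_zero hω)]
  exact mul_sum_sq_le_sq_sum univ (q + 2) (fun i _ => hnn i) hentry
end

section
/- Let x ∈ ℝ^n be a vector with exactly n − r strictly positive entries and r zero entries, where r < n − 1 (so x has at least two positive entries). Then there exists a vector x' ∈ ℝ^n with nonnegative entries having exactly n − r − 1 positive entries such that wₚ(x') < wₚ(x). In particular, x' may be obtained by scaling x so that its smallest positive entry equals 1 and then setting one such entry to 0. -/
open Finset

theorem zero_component_reduces_pseudoweight (n r : ℕ) (x : Fin n → ℝ)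
    (hnn : ∀ i, 0 ≤ x i)
    (hcard : (univ.filter (fun i => 0 < x i)).card = n - r)
    (hr : r + 1 < n) :
    ∃ x' : Fin n → ℝ, (∀ i, 0 ≤ x' i) ∧
      (univ.filter (fun i => 0 < x' i)).card = n - r - 1 ∧
      (∑ i, x' i) ^ 2 / (∑ i, x' i ^ 2) < (∑ i, x i) ^ 2 / (∑ i, x i ^ 2) := by
  set P : Finset (Fin n) := univ.filter (fun i => 0 < x i) with hP
  have hcard2 : 2 ≤ P.card := by omega
  have hPne : P.Nonempty := Finset.card_pos.mp (by omega)
  obtain ⟨i₀, hi₀P, hmin⟩ := P.exists_min_image x hPne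
  have ha : 0 < x i₀ := (Finset.mem_filter.mp hi₀P).2
  set a := x i₀ with haa
  set x' := Function.update x i₀ 0 with hx'
  have hnn' : ∀ i, 0 ≤ x' i := by
    intro i
    by_cases h : i = i₀
    · simp [hx', h]
    · simp [hx', Function.update_of_ne h]; exact hnn i
  -- sums
  have hsum : ∑ i, x' i = (∑ i, x i) - a := by
    rw [hx', Finset.sum_update_of_mem (Finset.mem_univ i₀)]
    rw [Finset.sum_eq_sum_sdiff_singleton_add (Finset.mem_univ i₀) x]
    ring
  have hsumsq : ∑ i, x' i ^ 2 = (∑ i, x i ^ 2) - a ^ 2 := by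
    have : (fun i => x' i ^ 2) = Function.update (fun i => x i ^ 2) i₀ 0 := by
      funext i
      by_cases h : i = i₀
      · subst h; simp [hx']
      · simp [hx', Function.update_of_ne h]
    rw [this, Finset.sum_update_of_mem (Finset.mem_univ i₀)]
    rw [Finset.sum_eq_sum_sdiff_singleton_add (Finset.mem_univ i₀) (fun i => x i ^ 2)]
    ring
  set S := ∑ i, x i with hS
  set Q := ∑ i, x i ^ 2 with hQ
  -- key facts
  have h2a : 2 * a ≤ S := by
    have h1 : ∑ i ∈ P, a ≤ ∑ i ∈ P, x i := Finset.sum_le_sum (fun i hi => hmin i hi)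
    have h2 : ∑ i ∈ P, x i ≤ S := by
      apply Finset.sum_le_sum_of_subset_of_nonneg (Finset.subset_univ P)
      intro i _ _; exact hnn i
    have h3 : (P.card : ℝ) * a = ∑ i ∈ P, a := by rw [Finset.sum_const]; ring
    have h4 : (2 : ℝ) ≤ (P.card : ℝ) := by exact_mod_cast hcard2
    nlinarith
  have haSQ : a * S ≤ Q := by
    have : ∀ i ∈ univ, a * x i ≤ x i ^ 2 := by
      intro i _
      by_cases h : 0 < x i
      · have : a ≤ x i := hmin i (Finset.mem_filter.mpr ⟨Finset.mem_univ i, h⟩)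
        nlinarith
      · have : x i = 0 := le_antisymm (not_lt.mp h) (hnn i)
        simp [this]
    calc a * S = ∑ i, a * x i := by rw [hS, Finset.mul_sum]
    _ ≤ Q := Finset.sum_le_sum this
  have hSpos : 0 < S := by nlinarith
  have hQpos : 0 < Q := by nlinarith
  have hQa : 0 < Q - a ^ 2 := by nlinarith
  refine ⟨x', hnn', ?_, ?_⟩
  · have hfil : univ.filter (fun i => 0 < x' i) = P.erase i₀ := by
      ext i
      simp only [Finset.mem_filter, Finset.mem_erase, Finset.mem_univ, true_and, hP]
      constructor
      · intro h
        by_cases hi : i = i₀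
        · exfalso; rw [hx', hi] at h; simp at h
        · exact ⟨hi, by rwa [hx', Function.update_of_ne hi] at h⟩
      · rintro ⟨hi, hpos⟩
        rwa [hx', Function.update_of_ne hi]
    rw [hfil, Finset.card_erase_of_mem hi₀P, hcard]
  · rw [hsum, hsumsq]
    rw [div_lt_div_iff₀ hQa hQpos]
    have haS : a < S := by nlinarith
    have h1 : a * Q < S * Q := by nlinarith
    have h2 : a * S ^ 2 ≤ S * Q := by nlinarith
    nlinarith
end

section
/- Let 0 < m ≤ M be reals and let x ∈ ℝ^n be a vector each of whose entries is either 0 or lies in [m, M], with at least one entry equal to m and at least one equal to M. If some entry x_j satisfies m < x_j < M, then there exists a vector x' obtained from x by replacing x_j with either m or M such that wₚ(x') ≤ wₚ(x). -/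
open Finset

theorem push_to_endpoint (n : ℕ) (m M : ℝ) (x : Fin n → ℝ)
    (hm : 0 < m) (hmM : m ≤ M)
    (hx : ∀ i, x i = 0 ∨ (m ≤ x i ∧ x i ≤ M))
    (hminattained : ∃ i, x i = m) (hmaxattained : ∃ i, x i = M)
    (j : Fin n) (hj1 : m < x j) (hj2 : x j < M) :
    ∃ c : ℝ, (c = m ∨ c = M) ∧
      (∑ i, Function.update x j c i) ^ 2 / (∑ i, Function.update x j c i ^ 2) ≤
        (∑ i, x i) ^ 2 / (∑ i, x i ^ 2) := by
  obtain ⟨i₀, hi₀⟩ := hminattained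
  have hij : i₀ ≠ j := by
    intro h; rw [h] at hi₀; linarith
  set a := ∑ i ∈ univ \ {j}, x i with ha
  set b := ∑ i ∈ univ \ {j}, x i ^ 2 with hb
  have hxnn : ∀ i, 0 ≤ x i := by
    intro i; rcases hx i with h | ⟨h1, _⟩ <;> linarith
  have haN : 0 ≤ a := Finset.sum_nonneg fun i _ => hxnn i
  have hi₀mem : i₀ ∈ univ \ {j} := by simp [hij]
  have hbm : x i₀ ^ 2 ≤ b :=
    Finset.single_le_sum (fun i _ => sq_nonneg (x i)) hi₀mem
  rw [hi₀] at hbm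
  have hb0 : 0 < b := lt_of_lt_of_le (by positivity) hbm
  have key : ∀ f : Fin n → ℝ, ∑ i, f i = f j + ∑ i ∈ univ \ {j}, f i := by
    intro f
    rw [← Finset.erase_eq, Finset.add_sum_erase _ f (mem_univ j)]
  have hupd : ∀ c : ℝ, ∑ i, Function.update x j c i = c + a := by
    intro c
    rw [key (Function.update x j c), Function.update_self, ha]
    congr 1
    apply Finset.sum_congr rfl
    intro i hi
    rw [Finset.mem_sdiff, Finset.mem_singleton] at hi
    exact Function.update_of_ne hi.2 _ _
  have hupd2 : ∀ c : ℝ, ∑ i, Function.update x j c i ^ 2 = c ^ 2 + b := by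
    intro c
    rw [key (fun i => Function.update x j c i ^ 2), Function.update_self, hb]
    congr 1
    apply Finset.sum_congr rfl
    intro i hi
    rw [Finset.mem_sdiff, Finset.mem_singleton] at hi
    rw [Function.update_of_ne hi.2]
  have hS : ∑ i, x i = x j + a := key x
  have hQ : ∑ i, x i ^ 2 = x j ^ 2 + b := key (fun i => x i ^ 2)
  by_cases hcase : a * x j ≤ b
  · refine ⟨m, Or.inl rfl, ?_⟩
    rw [hupd, hupd2, hS, hQ]
    rw [div_le_div_iff₀ (by positivity) (by positivity)]
    nlinarith [mul_nonneg (sub_nonneg.2 hj1.le) (sub_nonneg.2 hcase),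
      mul_nonneg (mul_nonneg (sub_nonneg.2 hj1.le) (sub_nonneg.2 hcase)) (by linarith : (0:ℝ) ≤ 2 * a + m),
      sq_nonneg (x j - m), mul_nonneg haN hm.le, mul_nonneg haN (hxnn j),
      mul_nonneg (mul_nonneg (sub_nonneg.2 hj1.le) (hxnn j)) (by nlinarith : (0:ℝ) ≤ b - a * m),
      mul_nonneg (mul_nonneg haN haN) (sub_nonneg.2 hj1.le)]
  · push_neg at hcase
    refine ⟨M, Or.inr rfl, ?_⟩
    rw [hupd, hupd2, hS, hQ]
    rw [div_le_div_iff₀ (by positivity) (by positivity)]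
    nlinarith [mul_nonneg (sub_nonneg.2 hj2.le) (sub_nonneg.2 hcase.le),
      mul_nonneg (mul_nonneg (sub_nonneg.2 hj2.le) (sub_nonneg.2 hcase.le)) (by linarith : (0:ℝ) ≤ 2 * a + M),
      mul_nonneg (mul_nonneg (sub_nonneg.2 hj2.le) (hxnn j)) (by nlinarith : (0:ℝ) ≤ a * M - b),
      mul_nonneg (mul_nonneg haN haN) (sub_nonneg.2 hj2.le)]
end

section
/- Let x ∈ ℝ^n be a nonzero vector with nonnegative entries. Let N = |supp(x)|, and let m and M be the smallest and largest values among the nonzero entries of x, respectively. Then wₚ(x) ≥ N · 4mM/(m+M)². -/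
open Finset

theorem pseudoweight_lower_bound_mM (n : ℕ) (x : Fin n → ℝ) (m M : ℝ)
    (hx : x ≠ 0) (hnn : ∀ i, 0 ≤ x i)
    (hbound : ∀ i ∈ univ.filter (fun i => x i ≠ 0), m ≤ x i ∧ x i ≤ M)
    (hmatt : ∃ i ∈ univ.filter (fun i => x i ≠ 0), x i = m)
    (hMatt : ∃ i ∈ univ.filter (fun i => x i ≠ 0), x i = M) :
    (∑ i, x i) ^ 2 / (∑ i, x i ^ 2) ≥
      (univ.filter (fun i => x i ≠ 0)).card * (4 * m * M / (m + M) ^ 2) := by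
  set S := univ.filter (fun i => x i ≠ 0) with hS
  obtain ⟨i0, hi0, hi0m⟩ := hmatt
  obtain ⟨i1, hi1, hi1M⟩ := hMatt
  have hi0ne : x i0 ≠ 0 := (mem_filter.mp hi0).2
  have hm : 0 < m := hi0m ▸ lt_of_le_of_ne (hnn i0) (Ne.symm hi0ne)
  have hmM : m ≤ M := hi1M ▸ (hbound i1 hi1).1
  have hMpos : 0 < M := lt_of_lt_of_le hm hmM
  -- sums restrict to S
  have hsum : ∑ i, x i = ∑ i ∈ S, x i := by
    rw [hS]
    exact (Finset.sum_filter_of_ne (fun i _ h => h)).symm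
  have hsq : ∑ i, x i ^ 2 = ∑ i ∈ S, x i ^ 2 := by
    rw [hS]
    refine (Finset.sum_filter_of_ne (fun i _ h => ?_)).symm
    intro h0; exact h (by rw [h0]; ring)
  set s := ∑ i ∈ S, x i with hsdef
  set q := ∑ i ∈ S, x i ^ 2 with hqdef
  set N : ℝ := (S.card : ℝ) with hNdef
  have hqpos : 0 < q := by
    apply Finset.sum_pos'
    · intro i _; positivity
    · exact ⟨i0, hi0, by positivity⟩
  have hNi : (1 : ℝ) ≤ N := by
    have : 0 < S.card := Finset.card_pos.mpr ⟨i0, hi0⟩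
    rw [hNdef]; exact_mod_cast Nat.one_le_iff_ne_zero.mpr this.ne'
  have hkey : q ≤ (m + M) * s - m * M * N := by
    have : ∀ i ∈ S, x i ^ 2 ≤ (m + M) * x i - m * M := by
      intro i hi
      obtain ⟨h1, h2⟩ := hbound i hi
      nlinarith [mul_nonneg (sub_nonneg.mpr h1) (sub_nonneg.mpr h2)]
    calc q ≤ ∑ i ∈ S, ((m + M) * x i - m * M) := Finset.sum_le_sum this
      _ = (m + M) * s - m * M * N := by
          rw [Finset.sum_sub_distrib, ← Finset.mul_sum, Finset.sum_const]
          push_cast [hNdef]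
          ring
  rw [hsum, hsq, ge_iff_le]
  have heq : N * (4 * m * M / (m + M) ^ 2) = N * (4 * m * M) / (m + M) ^ 2 := by ring
  rw [heq, div_le_div_iff₀ (by positivity) hqpos]
  have hNpos : 0 < N := lt_of_lt_of_le one_pos hNi
  nlinarith [sq_nonneg (s * (m + M) - 2 * m * M * N), mul_pos (mul_pos hm hMpos) hNpos,
    mul_le_mul_of_nonneg_left hkey (by positivity : (0:ℝ) ≤ 4 * m * M * N)]
end

section
/- Let x ∈ ℝ^n be a nonzero vector with nonnegative entries, N = |supp(x)|, m and M the smallest and largest nonzero entries of x, and r = M/m. Then wₚ(x) ≥ N · 4r/(r+1)². -/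
open Finset

theorem pseudoweight_lower_bound_ratio (n : ℕ) (x : Fin n → ℝ) (m M r : ℝ)
    (hx : x ≠ 0) (hnn : ∀ i, 0 ≤ x i)
    (hbound : ∀ i ∈ univ.filter (fun i => x i ≠ 0), m ≤ x i ∧ x i ≤ M)
    (hmatt : ∃ i ∈ univ.filter (fun i => x i ≠ 0), x i = m)
    (hMatt : ∃ i ∈ univ.filter (fun i => x i ≠ 0), x i = M)
    (hr : r = M / m) :
    (∑ i, x i) ^ 2 / (∑ i, x i ^ 2) ≥
      (univ.filter (fun i => x i ≠ 0)).card * (4 * r / (r + 1) ^ 2) := by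
  set s : Finset (Fin n) := univ.filter (fun i => x i ≠ 0) with hs
  obtain ⟨i0, hi0, hi0m⟩ := hmatt
  have hi0ne : x i0 ≠ 0 := (mem_filter.mp hi0).2
  have hm : 0 < m := hi0m ▸ lt_of_le_of_ne (hnn i0) (Ne.symm hi0ne)
  obtain ⟨i1, hi1, hi1M⟩ := hMatt
  have hmM : m ≤ M := hi1M ▸ (hbound i1 hi1).1
  have hMpos : 0 < M := lt_of_lt_of_le hm hmM
  have hN1 : 1 ≤ (s.card : ℝ) := by
    have : 0 < s.card := card_pos.mpr ⟨i0, hi0⟩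
    exact_mod_cast this
  have hsum : ∑ i, x i = ∑ i ∈ s, x i := (Finset.sum_filter_of_ne (fun i _ h => h)).symm
  have hsumsq : ∑ i, x i ^ 2 = ∑ i ∈ s, x i ^ 2 :=
    (Finset.sum_filter_of_ne (fun i _ h => by
      intro hx0; exact h (by simpa [hx0] using (by rw [hx0]; norm_num : x i ^ 2 = 0)))).symm
  set S := ∑ i ∈ s, x i with hS
  set Q := ∑ i ∈ s, x i ^ 2 with hQ
  have hSlb : (s.card : ℝ) * m ≤ S := by
    calc (s.card : ℝ) * m = ∑ _i ∈ s, m := by rw [Finset.sum_const, nsmul_eq_mul]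
    _ ≤ S := Finset.sum_le_sum (fun i hi => (hbound i hi).1)
  have hSpos : 0 < S := lt_of_lt_of_le (by positivity) hSlb
  have hQle : Q ≤ (m + M) * S - (s.card : ℝ) * (m * M) := by
    have hterm : ∀ i ∈ s, x i ^ 2 ≤ (m + M) * x i - m * M := by
      intro i hi
      obtain ⟨h1, h2⟩ := hbound i hi
      nlinarith [mul_nonneg (sub_nonneg.mpr h1) (sub_nonneg.mpr h2)]
    calc Q ≤ ∑ i ∈ s, ((m + M) * x i - m * M) := Finset.sum_le_sum hterm
    _ = (m + M) * S - (s.card : ℝ) * (m * M) := by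
        rw [Finset.sum_sub_distrib, ← Finset.mul_sum, Finset.sum_const, nsmul_eq_mul]
  have hQpos : 0 < Q := by
    have h : ∀ i ∈ s, m ^ 2 ≤ x i ^ 2 := fun i hi => by nlinarith [(hbound i hi).1]
    have h2 := Finset.sum_le_sum h
    rw [Finset.sum_const, nsmul_eq_mul] at h2
    nlinarith
  rw [hsum, hsumsq, hr, ge_iff_le]
  have hrw : (s.card : ℝ) * (4 * (M / m) / (M / m + 1) ^ 2)
      = (s.card : ℝ) * (4 * m * M) / (m + M) ^ 2 := by
    field_simp
    ring
  rw [hrw, div_le_div_iff₀ (by positivity) hQpos]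
  have h4 : 0 ≤ 4 * ((s.card : ℝ) * (m * M)) := by positivity
  nlinarith [sq_nonneg ((m + M) * S - 2 * ((s.card : ℝ) * (m * M))),
    mul_le_mul_of_nonneg_left hQle h4]
end
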